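/- arXiv:1211.5919 — 3 statements merged into one kernel-verified Lean document; each statement's English description precedes it below -/
import Mathlib

section
/- Let ε ≥ 0, let X be a nonempty metric space, let B be a metric space, and let f₀, f₁ : X → B both be e^ε-Lipschitz and co-Lipschitz maps. Suppose d(f₀(x), f₁(x)) ≤ δ for all x ∈ X. Then for every b ∈ B the Hausdorff distance between the fibers satisfies d_H(f₀^{-1}(b), f₁^{-1}(b)) ≤ e^ε · δ. (This is the equivalence, asserted in the paper's Remark after Theorem C, between closeness of the maps and fiber-wise Hausdorff closeness for LcL maps.) -/
open Metric Set

/-- A map `f : X → Y` between metric spaces is an `e^ε`-Lipschitz and co-Lipschitz map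
(`e^ε`-LcL) if for every `p ∈ X` and every `r > 0` one has
`B_{e^{-ε}·r}(f p) ⊆ f '' B_r(p) ⊆ B_{e^ε·r}(f p)`. -/
def IsLcL {X Y : Type*} [MetricSpace X] [MetricSpace Y] (ε : ℝ) (f : X → Y) : Prop :=
  ∀ (p : X) (r : ℝ), 0 < r →
    ball (f p) (Real.exp (-ε) * r) ⊆ f '' ball p r ∧
    f '' ball p r ⊆ ball (f p) (Real.exp ε * r)

lemma infDist_fiber_aux {X B : Type*} [MetricSpace X] [MetricSpace B]
    {ε : ℝ} {f : X → B} (hf : IsLcL ε f) {δ : ℝ} (hδ0 : 0 ≤ δ) (b : B) (x : X)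
    (h : dist (f x) b ≤ δ) :
    infDist x (f ⁻¹' {b}) ≤ Real.exp ε * δ := by
  refine le_of_forall_gt_imp_ge_of_dense fun r hr => ?_
  have hr0 : 0 < r := lt_of_le_of_lt (by positivity) hr
  have hb : b ∈ ball (f x) (Real.exp (-ε) * r) := by
    rw [mem_ball, dist_comm]
    calc dist (f x) b ≤ δ := h
      _ = Real.exp (-ε) * (Real.exp ε * δ) := by
          rw [← mul_assoc, ← Real.exp_add]; simp
      _ < Real.exp (-ε) * r := by
          exact mul_lt_mul_of_pos_left hr (Real.exp_pos _)
  obtain ⟨y, hy, hfy⟩ := (hf x r hr0).1 hb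
  have hmem : y ∈ f ⁻¹' {b} := hfy
  calc infDist x (f ⁻¹' {b}) ≤ dist x y := infDist_le_dist_of_mem hmem
    _ ≤ r := by rw [dist_comm]; exact le_of_lt (mem_ball.1 hy)

/-- If `f₀, f₁ : X → B` are `e^ε`-LcL maps with `dist (f₀ x) (f₁ x) ≤ δ` for all `x`,
then for every `b ∈ B` the Hausdorff distance between the fibers satisfies
`d_H(f₀⁻¹(b), f₁⁻¹(b)) ≤ e^ε · δ`. -/
theorem lcl_hausdorffDist_fibers_le {X B : Type*} [MetricSpace X] [MetricSpace B]
    [Nonempty X] {ε : ℝ} (hε : 0 ≤ ε) {f₀ f₁ : X → B}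
    (hf₀ : IsLcL ε f₀) (hf₁ : IsLcL ε f₁)
    {δ : ℝ} (hδ : ∀ x : X, dist (f₀ x) (f₁ x) ≤ δ) (b : B) :
    hausdorffDist (f₀ ⁻¹' {b}) (f₁ ⁻¹' {b}) ≤ Real.exp ε * δ := by
  obtain ⟨x₀⟩ := ‹Nonempty X›
  have hδ0 : 0 ≤ δ := le_trans dist_nonneg (hδ x₀)
  apply hausdorffDist_le_of_infDist (by positivity)
  · intro x hx
    have hx' : f₀ x = b := hx
    exact infDist_fiber_aux hf₁ hδ0 b x (hx' ▸ (dist_comm (f₀ x) (f₁ x) ▸ hδ x))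
  · intro x hx
    have hx' : f₁ x = b := hx
    exact infDist_fiber_aux hf₀ hδ0 b x (hx' ▸ hδ x)
end

section
/- Let ε ≥ 0, let X be a nonempty metric space, let B be a metric space, and let f : X → B be an e^ε-Lipschitz and co-Lipschitz map. Then for all p, q ∈ B the Hausdorff distance between the fibers satisfies e^{-ε} · d(p, q) ≤ d_H(f^{-1}(p), f^{-1}(q)) ≤ e^ε · d(p, q). -/
open Metric Set

/-- For an `e^ε`-LcL map `f : X → B` from a nonempty metric space, the Hausdorff distance
between any two fibers satisfies
`e^{-ε} · d(p, q) ≤ d_H(f⁻¹(p), f⁻¹(q)) ≤ e^ε · d(p, q)`. -/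
theorem lcl_hausdorffDist_fibers {X B : Type*} [MetricSpace X] [MetricSpace B]
    [Nonempty X] {ε : ℝ} (hε : 0 ≤ ε) {f : X → B} (hf : IsLcL ε f) (p q : B) :
    Real.exp (-ε) * dist p q ≤ hausdorffDist (f ⁻¹' {p}) (f ⁻¹' {q}) ∧
      hausdorffDist (f ⁻¹' {p}) (f ⁻¹' {q}) ≤ Real.exp ε * dist p q := by
  have hexp : (0:ℝ) < Real.exp ε := Real.exp_pos ε
  have hexp' : (0:ℝ) < Real.exp (-ε) := Real.exp_pos (-ε)
  -- f is surjective
  have hsurj : ∀ y : B, ∃ x, f x = y := by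
    intro y
    obtain ⟨x0⟩ : Nonempty X := inferInstance
    set r := Real.exp ε * (dist (f x0) y + 1) with hr
    have hrpos : 0 < r := by positivity
    have hy : y ∈ ball (f x0) (Real.exp (-ε) * r) := by
      rw [mem_ball, dist_comm]
      have : Real.exp (-ε) * r = dist (f x0) y + 1 := by
        rw [hr, ← mul_assoc, ← Real.exp_add, neg_add_cancel, Real.exp_zero, one_mul]
      rw [this]; linarith [dist_nonneg (x := f x0) (y := y)]
    obtain ⟨x, _, hx⟩ := (hf x0 r hrpos).1 hy
    exact ⟨x, hx⟩
  -- f is e^ε-Lipschitz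
  have hLip : ∀ x y : X, dist (f x) (f y) ≤ Real.exp ε * dist x y := by
    intro x y
    refine le_of_forall_pos_le_add fun δ hδ => ?_
    set r := dist x y + Real.exp (-ε) * δ with hr
    have hrpos : 0 < r := by positivity
    have hy : y ∈ ball x r := by
      rw [mem_ball, dist_comm]
      have : 0 < Real.exp (-ε) * δ := by positivity
      linarith
    have := (hf x r hrpos).2 ⟨y, hy, rfl⟩
    rw [mem_ball, dist_comm] at this
    calc dist (f x) (f y) ≤ Real.exp ε * r := this.le
      _ = Real.exp ε * dist x y + Real.exp ε * (Real.exp (-ε) * δ) := by ring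
      _ = Real.exp ε * dist x y + δ := by
          rw [← mul_assoc, ← Real.exp_add, add_neg_cancel, Real.exp_zero, one_mul]
  -- for any point of one fiber, a close point of the other fiber
  have hkey : ∀ a b : B, ∀ x : X, f x = a → ∀ δ : ℝ, 0 < δ →
      ∃ y : X, f y = b ∧ dist x y < Real.exp ε * dist a b + δ := by
    intro a b x hx δ hδ
    set r := Real.exp ε * dist a b + δ with hr
    have hrpos : 0 < r := by positivity
    have hb : b ∈ ball (f x) (Real.exp (-ε) * r) := by
      rw [mem_ball, hx, dist_comm]
      have : Real.exp (-ε) * r = dist a b + Real.exp (-ε) * δ := by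
        rw [hr, mul_add, ← mul_assoc, ← Real.exp_add, neg_add_cancel, Real.exp_zero, one_mul]
      rw [this]
      have : 0 < Real.exp (-ε) * δ := by positivity
      linarith
    obtain ⟨y, hy, hfy⟩ := (hf x r hrpos).1 hb
    exact ⟨y, hfy, by rwa [mem_ball, dist_comm] at hy⟩
  -- infDist bounds
  have hinf : ∀ a b : B, ∀ x ∈ f ⁻¹' {a}, infDist x (f ⁻¹' {b}) ≤ Real.exp ε * dist a b := by
    intro a b x hx
    refine le_of_forall_pos_le_add fun δ hδ => ?_
    obtain ⟨y, hy, hd⟩ := hkey a b x hx δ hδ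
    exact le_trans (infDist_le_dist_of_mem (by simpa using hy)) hd.le
  -- finiteness of the Hausdorff edistance
  have hfin : EMetric.hausdorffEdist (f ⁻¹' {p}) (f ⁻¹' {q}) ≠ ⊤ := by
    have h1 : EMetric.hausdorffEdist (f ⁻¹' {p}) (f ⁻¹' {q})
        ≤ ENNReal.ofReal (Real.exp ε * (dist p q + dist q p) + 1) := by
      refine EMetric.hausdorffEdist_le_of_infEdist ?_ ?_
      · intro x hx
        obtain ⟨y, hy, hd⟩ := hkey p q x (by simpa using hx) 1 one_pos
        refine le_trans (EMetric.infEdist_le_edist_of_mem (by simpa using hy)) ?_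
        rw [edist_dist]
        refine ENNReal.ofReal_le_ofReal ?_
        nlinarith [dist_nonneg (x := q) (y := p), hexp.le]
      · intro x hx
        obtain ⟨y, hy, hd⟩ := hkey q p x (by simpa using hx) 1 one_pos
        refine le_trans (EMetric.infEdist_le_edist_of_mem (by simpa using hy)) ?_
        rw [edist_dist]
        refine ENNReal.ofReal_le_ofReal ?_
        nlinarith [dist_nonneg (x := p) (y := q), hexp.le]
    exact ne_top_of_le_ne_top ENNReal.ofReal_ne_top h1
  constructor
  · -- lower bound
    obtain ⟨x, hx⟩ := hsurj p
    have hxmem : x ∈ f ⁻¹' {p} := by simp [hx]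
    have hqne : (f ⁻¹' {q}).Nonempty := by
      obtain ⟨y, hy⟩ := hsurj q; exact ⟨y, by simp [hy]⟩
    have h1 : Real.exp (-ε) * dist p q ≤ infDist x (f ⁻¹' {q}) := by
      by_contra h
      push_neg at h
      obtain ⟨y, hy, hlt⟩ := (infDist_lt_iff hqne).1 h
      have hfy : f y = q := by simpa using hy
      have := hLip x y
      rw [hx, hfy] at this
      have h2 : dist p q < Real.exp ε * (Real.exp (-ε) * dist p q) :=
        lt_of_le_of_lt this (by exact (mul_lt_mul_iff_right₀ hexp).2 hlt)
      rw [← mul_assoc, ← Real.exp_add, add_neg_cancel, Real.exp_zero, one_mul] at h2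
      exact lt_irrefl _ h2
    exact le_trans h1 (infDist_le_hausdorffDist_of_mem hxmem hfin)
  · -- upper bound
    refine hausdorffDist_le_of_infDist (by positivity) ?_ ?_
    · exact hinf p q
    · intro x hx
      rw [dist_comm]
      exact hinf q p x hx
end

section
/- Let X and B be metric spaces, f₀, f₁ : X → B continuous maps, and ρ > 0, C > 0, δ ≥ 0 with δ < ρ/6 and d(f₀(x), f₁(x)) ≤ δ for all x ∈ X. Suppose Φ : B × X → X is continuous on D₁ = {(q, x) : d(f₁(x), q) < 2ρ/3} with f₁(Φ(q, x)) = q, Φ(q, x) = x whenever f₁(x) = q, and d(x, Φ(q, x)) ≤ 2Cρ on D₁; and suppose Ψ : B × X → X is continuous on D₀ = {(q, x) : d(f₀(x), q) < 2ρ/3} with f₀(Ψ(q, x)) = q, Ψ(q, x) = x whenever f₀(x) = q, and d(x, Ψ(q, x)) ≤ 2Cρ on D₀. Suppose further Γ : X × [0,1] → B is continuous with Γ(x, 0) = f₀(x), Γ(x, 1) = f₁(x) and d(Γ(x, t), f₀(x)) ≤ ρ/2 for all x and t. Define h(x) = Φ(f₀(x), x), g(x) = Ψ(f₁(x), x) and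 H(x, t) = Ψ(f₀(x), Φ(Γ(x, t), x)). Then H : X × [0,1] → X is a well-defined continuous map with H(x, 0) = g(h(x)), H(x, 1) = x and f₀(H(x, t)) = f₀(x) for all x ∈ X and t ∈ [0,1]; that is, H is a fiber-preserving (over f₀) homotopy from g ∘ h to the identity of X, and moreover d(x, H(x, t)) ≤ 4Cρ for all x, t. (This is the fiber-preserving homotopy constructed in the proof of Theorem B.) -/
open Metric Set

/-- The fiber-preserving homotopy constructed in the proof of Theorem B.  With neighborhood
retraction families `Φ` (for `f₁`) and `Ψ` (for `f₀`), maps `h x = Φ (f₀ x, x)`,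
`g x = Ψ (f₁ x, x)`, and a family of paths `Γ` from `f₀` to `f₁` staying `ρ/2`-close to
`f₀`, the formula `H (x, t) = Ψ (f₀ x, Φ (Γ (x, t), x))` defines a continuous
fiber-preserving (over `f₀`) homotopy from `g ∘ h` to the identity of `X`, moving points
a distance at most `4Cρ`. -/
theorem fiber_preserving_homotopy_construction {X B : Type*} [MetricSpace X] [MetricSpace B]
    {f₀ f₁ : X → B} (hf₀ : Continuous f₀) (hf₁ : Continuous f₁)
    {ρ C δ : ℝ} (hρ : 0 < ρ) (hC : 0 < C) (hδ0 : 0 ≤ δ) (hδ : δ < ρ / 6)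
    (hclose : ∀ x : X, dist (f₀ x) (f₁ x) ≤ δ)
    {Φ : B × X → X}
    (hΦc : ContinuousOn Φ {qx : B × X | dist (f₁ qx.2) qx.1 < 2 * ρ / 3})
    (hΦ1 : ∀ (q : B) (x : X), dist (f₁ x) q < 2 * ρ / 3 → f₁ (Φ (q, x)) = q)
    (hΦ2 : ∀ (q : B) (x : X), dist (f₁ x) q < 2 * ρ / 3 → f₁ x = q → Φ (q, x) = x)
    (hΦ3 : ∀ (q : B) (x : X), dist (f₁ x) q < 2 * ρ / 3 →
      dist x (Φ (q, x)) ≤ 2 * C * ρ)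
    {Ψ : B × X → X}
    (hΨc : ContinuousOn Ψ {qx : B × X | dist (f₀ qx.2) qx.1 < 2 * ρ / 3})
    (hΨ1 : ∀ (q : B) (x : X), dist (f₀ x) q < 2 * ρ / 3 → f₀ (Ψ (q, x)) = q)
    (hΨ2 : ∀ (q : B) (x : X), dist (f₀ x) q < 2 * ρ / 3 → f₀ x = q → Ψ (q, x) = x)
    (hΨ3 : ∀ (q : B) (x : X), dist (f₀ x) q < 2 * ρ / 3 →
      dist x (Ψ (q, x)) ≤ 2 * C * ρ)
    {Γ : X × ℝ → B} (hΓc : ContinuousOn Γ (univ ×ˢ Icc (0 : ℝ) 1))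
    (hΓ0 : ∀ x : X, Γ (x, 0) = f₀ x) (hΓ1 : ∀ x : X, Γ (x, 1) = f₁ x)
    (hΓ : ∀ (x : X), ∀ t ∈ Icc (0 : ℝ) 1, dist (Γ (x, t)) (f₀ x) ≤ ρ / 2) :
    -- `H (x, t) = Ψ (f₀ x, Φ (Γ (x, t), x))` is continuous on `X × [0,1]`
    ContinuousOn (fun xt : X × ℝ => Ψ (f₀ xt.1, Φ (Γ (xt.1, xt.2), xt.1)))
      (univ ×ˢ Icc (0 : ℝ) 1) ∧
    -- at `t = 0` it is `g ∘ h`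
    (∀ x : X, Ψ (f₀ x, Φ (Γ (x, 0), x)) = Ψ (f₁ (Φ (f₀ x, x)), Φ (f₀ x, x))) ∧
    -- at `t = 1` it is the identity of `X`
    (∀ x : X, Ψ (f₀ x, Φ (Γ (x, 1), x)) = x) ∧
    -- it is fiber-preserving over `f₀`
    (∀ (x : X), ∀ t ∈ Icc (0 : ℝ) 1, f₀ (Ψ (f₀ x, Φ (Γ (x, t), x))) = f₀ x) ∧
    -- displacement bound
    (∀ (x : X), ∀ t ∈ Icc (0 : ℝ) 1,
      dist x (Ψ (f₀ x, Φ (Γ (x, t), x))) ≤ 4 * C * ρ) := by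

  have key1 : ∀ (x : X), ∀ t ∈ Icc (0:ℝ) 1, dist (f₁ x) (Γ (x, t)) < 2 * ρ / 3 := by
    intro x t ht
    calc dist (f₁ x) (Γ (x, t)) ≤ dist (f₁ x) (f₀ x) + dist (f₀ x) (Γ (x, t)) :=
          dist_triangle _ _ _
      _ ≤ δ + ρ / 2 := add_le_add (by rw [dist_comm]; exact hclose x)
          (by rw [dist_comm]; exact hΓ x t ht)
      _ < 2 * ρ / 3 := by linarith
  have key2 : ∀ (x : X), ∀ t ∈ Icc (0:ℝ) 1,
      dist (f₀ (Φ (Γ (x, t), x))) (f₀ x) < 2 * ρ / 3 := by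
    intro x t ht
    have h1 := hΦ1 _ _ (key1 x t ht)
    calc dist (f₀ (Φ (Γ (x, t), x))) (f₀ x)
        ≤ dist (f₀ (Φ (Γ (x, t), x))) (f₁ (Φ (Γ (x, t), x)))
            + dist (f₁ (Φ (Γ (x, t), x))) (f₀ x) := dist_triangle _ _ _
      _ ≤ δ + ρ / 2 := add_le_add (hclose _) (by rw [h1]; exact hΓ x t ht)
      _ < 2 * ρ / 3 := by linarith
  refine ⟨?_, ?_, ?_, ?_, ?_⟩
  · have hA : ContinuousOn (fun xt : X × ℝ => (Γ (xt.1, xt.2), xt.1))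
        (univ ×ˢ Icc (0:ℝ) 1) := by
      exact ContinuousOn.prodMk hΓc continuous_fst.continuousOn
    have hB : ContinuousOn (fun xt : X × ℝ => Φ (Γ (xt.1, xt.2), xt.1))
        (univ ×ˢ Icc (0:ℝ) 1) := by
      refine hΦc.comp hA ?_
      rintro ⟨x, t⟩ ⟨-, ht⟩
      exact key1 x t ht
    have hD : ContinuousOn (fun xt : X × ℝ => (f₀ xt.1, Φ (Γ (xt.1, xt.2), xt.1)))
        (univ ×ˢ Icc (0:ℝ) 1) :=
      ContinuousOn.prodMk (hf₀.comp continuous_fst).continuousOn hB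
    refine hΨc.comp hD ?_
    rintro ⟨x, t⟩ ⟨-, ht⟩
    exact key2 x t ht
  · intro x
    have hd : dist (f₁ x) (f₀ x) < 2 * ρ / 3 := by
      rw [dist_comm]; exact lt_of_le_of_lt (hclose x) (by linarith)
    rw [hΓ0 x, hΦ1 _ _ hd]
  · intro x
    have hd : dist (f₁ x) (f₁ x) < 2 * ρ / 3 := by
      rw [dist_self]; linarith
    rw [hΓ1 x, hΦ2 _ _ hd rfl]
    exact hΨ2 _ _ (by rw [dist_self]; linarith) rfl
  · intro x t ht
    exact hΨ1 _ _ (key2 x t ht)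
  · intro x t ht
    calc dist x (Ψ (f₀ x, Φ (Γ (x, t), x)))
        ≤ dist x (Φ (Γ (x, t), x)) + dist (Φ (Γ (x, t), x)) (Ψ (f₀ x, Φ (Γ (x, t), x))) :=
          dist_triangle _ _ _
      _ ≤ 2 * C * ρ + 2 * C * ρ :=
          add_le_add (hΦ3 _ _ (key1 x t ht)) (hΨ3 _ _ (key2 x t ht))
      _ = 4 * C * ρ := by ring
end
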